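/- For all natural numbers n ≥ 2, ∑_{i=2}^n ((4i−3)/(i(2i−1)))·∑_{j=2}^i (64j⁴−288j³+468j²−323j+84)/((j−1)·j·(2j−3)·(4j−7)·(4j−3)) = 2·(4H_n² + 4H_n + H_{2n}² + (−4H_n − 2)H_{2n} − H_{2n}^{(2)}). -/

import Mathlib

/-- The `m`-th harmonic number `H_m = ∑_{k=1}^m 1/k` in `ℚ`. -/
def H (n : ℕ) : ℚ := ∑ k ∈ Finset.Icc 1 n, (1 : ℚ) / k

/-- The generalized harmonic number of order `o`, `H_n^{(o)} = ∑_{k=1}^n 1/k^o` in `ℚ`. -/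
def Hgen (o n : ℕ) : ℚ := ∑ k ∈ Finset.Icc 1 n, (1 : ℚ) / (k : ℚ) ^ o

/-!
Both sums telescope. By partial fractions the inner summand is
`5/(3(j-1)) + 4/(3j) - 2/(2j-3) + 10/(3(4j-7)) - 10/(3(4j-3))`, so its partial sums from `j = 2`
are `4 H_i - 2 H_{2i} + 2 - 5/(3i) + 2/(2i-1) - 10/(3(4i-3))`, which vanishes at `i = 1`.
Multiplied by the outer weight `(4i-3)/(i(2i-1))`, this is exactly the forward difference of the
right-hand side, which also vanishes at `n = 1`.
-/

theorem Finset.sum_Icc_add_one_eq_sub {M : Type*} [AddCommGroup M] {f g : ℕ → M} {m n : ℕ}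
    (hmn : m ≤ n) (h : ∀ i, m ≤ i → f (i + 1) - f i = g (i + 1)) :
    ∑ i ∈ Finset.Icc (m + 1) n, g i = f n - f m := by
  induction n, hmn using Nat.le_induction with
  | base => simp
  | succ n hmn ih =>
    rw [Finset.sum_Icc_succ_top (by omega), ih, ← h n hmn]
    abel

theorem Hgen_succ (o n : ℕ) : Hgen o (n + 1) = Hgen o n + 1 / ((n : ℚ) + 1) ^ o := by
  rw [Hgen, Finset.sum_Icc_succ_top (by omega), Hgen]
  push_cast
  rfl

theorem H_eq_Hgen_one (n : ℕ) : H n = Hgen 1 n := by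
  simp [H, Hgen]

theorem H_succ (n : ℕ) : H (n + 1) = H n + 1 / ((n : ℚ) + 1) := by
  simp only [H_eq_Hgen_one, Hgen_succ, pow_one]

theorem H_two_mul_succ (n : ℕ) :
    H (2 * (n + 1)) = H (2 * n) + 1 / (2 * (n : ℚ) + 1) + 1 / (2 * (n : ℚ) + 2) := by
  rw [show 2 * (n + 1) = 2 * n + 1 + 1 by ring, H_succ, H_succ]
  push_cast
  ring

theorem Hgen_two_mul_succ (o n : ℕ) :
    Hgen o (2 * (n + 1)) =
      Hgen o (2 * n) + 1 / (2 * (n : ℚ) + 1) ^ o + 1 / (2 * (n : ℚ) + 2) ^ o := by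
  rw [show 2 * (n + 1) = 2 * n + 1 + 1 by ring, Hgen_succ, Hgen_succ]
  push_cast
  ring

def innerTerm (j : ℕ) : ℚ :=
  (64 * (j : ℚ) ^ 4 - 288 * (j : ℚ) ^ 3 + 468 * (j : ℚ) ^ 2 - 323 * (j : ℚ) + 84) /
    (((j : ℚ) - 1) * (j : ℚ) * (2 * (j : ℚ) - 3) * (4 * (j : ℚ) - 7) * (4 * (j : ℚ) - 3))

def innerClosedForm (i : ℕ) : ℚ :=
  4 * H i - 2 * H (2 * i) + 2 - 5 / (3 * (i : ℚ)) + 2 / (2 * (i : ℚ) - 1)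
    - 10 / (3 * (4 * (i : ℚ) - 3))

def outerWeight (i : ℕ) : ℚ := (4 * (i : ℚ) - 3) / ((i : ℚ) * (2 * (i : ℚ) - 1))

def outerClosedForm (n : ℕ) : ℚ :=
  2 * (4 * H n ^ 2 + 4 * H n + H (2 * n) ^ 2 + (-4 * H n - 2) * H (2 * n) - Hgen 2 (2 * n))

theorem innerClosedForm_one : innerClosedForm 1 = 0 := by
  norm_num [innerClosedForm, H, Finset.sum_Icc_succ_top]

theorem outerClosedForm_one : outerClosedForm 1 = 0 := by
  norm_num [outerClosedForm, H, Hgen, Finset.sum_Icc_succ_top]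

theorem innerClosedForm_succ_sub {i : ℕ} (hi : 1 ≤ i) :
    innerClosedForm (i + 1) - innerClosedForm i = innerTerm (i + 1) := by
  have hx : (1 : ℚ) ≤ i := by exact_mod_cast hi
  have : (i : ℚ) ≠ 0 := by positivity
  have : (i : ℚ) * 2 - 1 ≠ 0 := by linarith
  have : 4 * (i : ℚ) - 3 ≠ 0 := by linarith
  rw [innerClosedForm, innerClosedForm, innerTerm, H_succ, H_two_mul_succ]
  push_cast
  rw [add_sub_cancel_right, show 2 * ((i : ℚ) + 1) - 3 = 2 * i - 1 by ring,
    show 2 * ((i : ℚ) + 1) - 1 = 2 * i + 1 by ring, show 4 * ((i : ℚ) + 1) - 7 = 4 * i - 3 by ring,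
    show 4 * ((i : ℚ) + 1) - 3 = 4 * i + 1 by ring]
  field_simp
  ring

theorem outerClosedForm_succ_sub {n : ℕ} (hn : 1 ≤ n) :
    outerClosedForm (n + 1) - outerClosedForm n =
      outerWeight (n + 1) * innerClosedForm (n + 1) := by
  have hx : (1 : ℚ) ≤ n := by exact_mod_cast hn
  rw [outerClosedForm, outerClosedForm, outerWeight, innerClosedForm, H_succ, H_two_mul_succ,
    Hgen_two_mul_succ]
  have : 2 * ((n : ℚ) + 1) - 1 ≠ 0 := by linarith
  have : 4 * ((n : ℚ) + 1) - 3 ≠ 0 := by linarith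
  push_cast
  field_simp
  ring

theorem sum_innerTerm {i : ℕ} (hi : 1 ≤ i) :
    ∑ j ∈ Finset.Icc 2 i, innerTerm j = innerClosedForm i := by
  rw [Finset.sum_Icc_add_one_eq_sub hi fun k hk => innerClosedForm_succ_sub hk,
    innerClosedForm_one, sub_zero]

theorem stmt5 (n : ℕ) (hn : 2 ≤ n) :
    ∑ i ∈ Finset.Icc 2 n, ((4 * (i : ℚ) - 3) / ((i : ℚ) * (2 * (i : ℚ) - 1))) *
        ∑ j ∈ Finset.Icc 2 i,
          (64 * (j : ℚ) ^ 4 - 288 * (j : ℚ) ^ 3 + 468 * (j : ℚ) ^ 2 - 323 * (j : ℚ) + 84) /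
            (((j : ℚ) - 1) * (j : ℚ) * (2 * (j : ℚ) - 3) * (4 * (j : ℚ) - 7) * (4 * (j : ℚ) - 3))
      = 2 * (4 * (H n) ^ 2 + 4 * H n + (H (2 * n)) ^ 2 + (-4 * H n - 2) * H (2 * n)
          - Hgen 2 (2 * n)) := by
  have hinner : ∀ i ∈ Finset.Icc 2 n, outerWeight i * ∑ j ∈ Finset.Icc 2 i, innerTerm j
      = outerWeight i * innerClosedForm i := fun i hi => by
    rw [sum_innerTerm (one_le_two.trans (Finset.mem_Icc.1 hi).1)]
  calc _ = ∑ i ∈ Finset.Icc 2 n, outerWeight i * innerClosedForm i := Finset.sum_congr rfl hinner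
    _ = outerClosedForm n - outerClosedForm 1 :=
      Finset.sum_Icc_add_one_eq_sub (by omega) fun k hk => outerClosedForm_succ_sub hk
    _ = _ := by rw [outerClosedForm_one, sub_zero, outerClosedForm]
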